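/- Let p be an odd prime, F a finite field of characteristic p, and G a finite p-group. For the canonical involution * (linear extension of g ↦ g^{-1}), |V_*(FG)| = |F|^{(|G|-1)/2}. -/

import Mathlib

noncomputable def aug (F G : Type*) [CommSemiring F] [Monoid G] :
    MonoidAlgebra F G →ₐ[F] F := MonoidAlgebra.lift F F G 1

noncomputable def dia {F G : Type*} [Semiring F] (σ : G → G) :
    MonoidAlgebra F G → MonoidAlgebra F G := fun x => MonoidAlgebra.ofCoeff (Finsupp.mapDomain σ x.coeff)

noncomputable def sA {F : Type*} [Field F] {G : Type*} [Group G]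
    (x : MonoidAlgebra F G) : MonoidAlgebra F G := dia (fun g : G => g⁻¹) x

section StarLemmas

variable {F : Type*} [Field F] {G : Type*} [Group G]

lemma aug_single (g : G) (a : F) : aug F G (MonoidAlgebra.single g a) = a := by
  simp [aug, MonoidAlgebra.lift_single]

lemma sA_single (g : G) (a : F) :
    sA (MonoidAlgebra.single g a) = MonoidAlgebra.single g⁻¹ a := by
  unfold sA dia; exact congrArg MonoidAlgebra.ofCoeff Finsupp.mapDomain_single

lemma sA_add (x y : MonoidAlgebra F G) : sA (x + y) = sA x + sA y := by
  unfold sA dia; exact congrArg MonoidAlgebra.ofCoeff Finsupp.mapDomain_add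

lemma sA_zero : sA (0 : MonoidAlgebra F G) = 0 := by
  unfold sA dia; exact congrArg MonoidAlgebra.ofCoeff Finsupp.mapDomain_zero

lemma sA_smul (c : F) (x : MonoidAlgebra F G) : sA (c • x) = c • sA x := by
  unfold sA dia; exact congrArg MonoidAlgebra.ofCoeff (Finsupp.mapDomain_smul c x.coeff)

lemma sA_one : sA (1 : MonoidAlgebra F G) = 1 := by
  rw [MonoidAlgebra.one_def, sA_single]; simp

lemma sA_mul (x y : MonoidAlgebra F G) : sA (x * y) = sA y * sA x := by
  induction x using MonoidAlgebra.induction_linear with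
  | zero => simp [sA_zero]
  | add f g hf hg => rw [add_mul, sA_add, sA_add, mul_add, hf, hg]
  | single a b =>
    induction y using MonoidAlgebra.induction_linear with
    | zero => simp [sA_zero]
    | add f g hf hg => rw [mul_add, sA_add, sA_add, add_mul, hf, hg]
    | single c d =>
      rw [MonoidAlgebra.single_mul_single, sA_single, sA_single, sA_single,
        MonoidAlgebra.single_mul_single, mul_inv_rev, mul_comm d b]

lemma sA_invol (x : MonoidAlgebra F G) : sA (sA x) = x := by
  unfold sA dia
  show MonoidAlgebra.ofCoeff (Finsupp.mapDomain _ (Finsupp.mapDomain _ x.coeff)) = x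
  rw [← Finsupp.mapDomain_comp]
  simp [Function.comp_def, MonoidAlgebra.ofCoeff_coeff]

lemma sA_apply (x : MonoidAlgebra F G) (g : G) : (sA x).coeff g = x.coeff g⁻¹ := by
  unfold sA dia
  have := Finsupp.mapDomain_apply (f := fun g : G => g⁻¹)
    (fun a b h => by simpa using congrArg Inv.inv h) x.coeff g⁻¹
  simpa using this

lemma aug_sA (x : MonoidAlgebra F G) : aug F G (sA x) = aug F G x := by
  induction x using MonoidAlgebra.induction_linear with
  | zero => simp [sA_zero]
  | add f g hf hg => rw [sA_add, map_add, map_add, hf, hg]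
  | single a b => rw [sA_single, aug_single, aug_single]

lemma sA_pow (x : MonoidAlgebra F G) (k : ℕ) : sA (x ^ k) = sA x ^ k := by
  induction k with
  | zero => simpa using sA_one
  | succ k ih => rw [pow_succ, sA_mul, ih, ← pow_succ']

end StarLemmas
section Nilpotency

variable {p : ℕ} [Fact p.Prime] {F : Type*} [Field F] [CharP F p]

open MonoidAlgebra

lemma single_central {G : Type*} [Group G] {z : G} (hz : z ∈ Subgroup.center G)
    (a : MonoidAlgebra F G) :
    MonoidAlgebra.single z (1 : F) * a = a * MonoidAlgebra.single z 1 := by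
  induction a using MonoidAlgebra.induction_linear with
  | zero => simp
  | add f g hf hg => rw [mul_add, add_mul, hf, hg]
  | single g c =>
    rw [MonoidAlgebra.single_mul_single, MonoidAlgebra.single_mul_single,
      (Subgroup.mem_center_iff.mp hz g), one_mul, mul_one]

lemma submodule_pow_mono {R A : Type*} [CommSemiring R] [Semiring A] [Algebra R A]
    {M N : Submodule R A} (h : M ≤ N) : ∀ s : ℕ, M ^ s ≤ N ^ s := by
  intro s
  induction s with
  | zero => simp
  | succ s ih => rw [pow_succ, pow_succ]; exact mul_le_mul' ih h

universe u

lemma delta_pow_eq_bot (p : ℕ) [Fact p.Prime] (F : Type*) [Field F] [CharP F p] :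
    ∀ (Nc : ℕ) (G : Type u) [Group G] [Finite G], Nat.card G = Nc → IsPGroup p G →
      ∃ n : ℕ, 0 < n ∧
        (LinearMap.ker (aug F G).toLinearMap : Submodule F (MonoidAlgebra F G)) ^ n = ⊥ := by
  classical
  have hp : p.Prime := Fact.out
  intro Nc
  induction Nc using Nat.strong_induction_on with
  | _ Nc ih =>
  intro G _ _ hcard hG
  by_cases hone : Nat.card G = 1
  · -- trivial group
    haveI : Subsingleton G := by
      rw [Nat.card_eq_one_iff_unique] at hone; exact hone.1
    refine ⟨1, one_pos, ?_⟩
    rw [pow_one, eq_bot_iff]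
    intro x hx
    have hx' : aug F G x = 0 := by
      simpa using LinearMap.mem_ker.mp hx
    have hxs : x = MonoidAlgebra.single (1 : G) (x.coeff 1) := by
      ext g; rw [Subsingleton.elim g (1 : G)]; simp
    have : x.coeff 1 = 0 := by
      rw [hxs, aug_single] at hx'; exact hx'
    rw [Submodule.mem_bot, hxs, this]
    simp
  · -- nontrivial group
    haveI : Nontrivial G := by
      rw [← Finite.one_lt_card_iff_nontrivial]
      have := Nat.card_pos (α := G)
      omega
    haveI : Nontrivial (Subgroup.center G) := hG.center_nontrivial
    obtain ⟨ζ, hζ⟩ := exists_ne (1 : Subgroup.center G)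
    set z₀ : G := (ζ : G) with hz₀
    have hz₀c : z₀ ∈ Subgroup.center G := ζ.2
    have hz₀1 : z₀ ≠ 1 := fun h => hζ (Subtype.ext h)
    obtain ⟨k, hk⟩ := hG z₀
    obtain ⟨j, hjle, hj⟩ := (Nat.dvd_prime_pow hp).mp (orderOf_dvd_of_pow_eq_one hk)
    have hj1 : 1 ≤ j := by
      by_contra h
      have h0 : j = 0 := by omega
      apply hz₀1
      apply orderOf_eq_one_iff.mp
      rw [hj, h0, pow_zero]
    set z : G := z₀ ^ p ^ (j - 1) with hzdef
    have hzc : z ∈ Subgroup.center G := Subgroup.pow_mem _ hz₀c _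
    have hzp : z ^ p = 1 := by
      rw [hzdef, ← pow_mul, ← pow_succ, Nat.sub_add_cancel hj1, ← hj, pow_orderOf_eq_one]
    have hz1 : z ≠ 1 := by
      intro h
      rw [hzdef] at h
      have hdvd := orderOf_dvd_of_pow_eq_one h
      rw [hj] at hdvd
      have := (Nat.pow_dvd_pow_iff_le_right hp.one_lt).mp hdvd
      omega
    have hordz : orderOf z = p := by
      have hdvd := orderOf_dvd_of_pow_eq_one hzp
      rcases (Nat.dvd_prime hp).mp hdvd with h1 | h1
      · exact absurd (orderOf_eq_one_iff.mp h1) hz1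
      · exact h1
    -- the normal subgroup N = zpowers z
    set N : Subgroup G := Subgroup.zpowers z with hNdef
    have hNle : N ≤ Subgroup.center G := Subgroup.zpowers_le.mpr hzc
    haveI : N.Normal := by
      constructor
      intro n hn g
      have : g * n = n * g := Subgroup.mem_center_iff.mp (hNle hn) g
      rw [this, mul_assoc, mul_inv_cancel, mul_one]
      exact hn
    set Q := G ⧸ N with hQdef
    have hcardN : Nat.card N = p := by rw [hNdef, Nat.card_zpowers, hordz]
    have hcardQ : Nat.card G = Nat.card Q * p := by
      rw [← hcardN]; exact Subgroup.card_eq_card_quotient_mul_card_subgroup N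
    have hQlt : Nat.card Q < Nc := by
      have h1 := Nat.card_pos (α := Q)
      have h2 := hp.two_le
      rw [← hcard]
      nlinarith [hcardQ]
    obtain ⟨m, hm, hQbot⟩ := ih (Nat.card Q) hQlt Q rfl (hG.to_quotient N)
    -- the algebra map π
    set π : MonoidAlgebra F G →ₐ[F] MonoidAlgebra F Q :=
      MonoidAlgebra.mapDomainAlgHom F F (QuotientGroup.mk' N) with hπdef
    have hπ_single : ∀ (g : G) (c : F),
        π (MonoidAlgebra.single g c) = MonoidAlgebra.single (QuotientGroup.mk' N g) c := by
      intro g c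
      simp [hπdef, MonoidAlgebra.mapDomainAlgHom_apply, Finsupp.mapDomain_single, QuotientGroup.mk'_apply]
      rfl
    have haug : ∀ x, aug F Q (π x) = aug F G x := by
      intro x
      induction x using MonoidAlgebra.induction_linear with
      | zero => simp
      | add f g hf hg => rw [map_add, map_add, map_add, hf, hg]
      | single g c => rw [hπ_single, aug_single, aug_single]
    -- the central nilpotent t
    set t : MonoidAlgebra F G := MonoidAlgebra.single z 1 - 1 with htdef
    have htc : ∀ a : MonoidAlgebra F G, t * a = a * t := by
      intro a
      rw [htdef, sub_mul, mul_sub, one_mul, mul_one, single_central hzc]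
    haveI : CharP (MonoidAlgebra F G) p := by
      apply charP_of_injective_algebraMap (R := F) (A := MonoidAlgebra F G)
      intro a b h
      have := congrArg (fun v : MonoidAlgebra F G => v.coeff 1) h
      simpa [MonoidAlgebra.coe_algebraMap] using this
    have htp : t ^ p = 0 := by
      rw [htdef, sub_pow_char_of_commute _ (Commute.one_right _), one_pow,
        MonoidAlgebra.single_pow, one_pow, hzp, ← MonoidAlgebra.one_def, sub_self]
    -- J ≤ I
    have hJI : (LinearMap.ker π.toLinearMap : Submodule F (MonoidAlgebra F G)) ≤
        LinearMap.range (LinearMap.mulLeft F t) := by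
      intro x hx
      have hx0 : Finsupp.mapDomain (⇑(QuotientGroup.mk' N)) x.coeff = 0 := by
        have := congrArg MonoidAlgebra.coeff (LinearMap.mem_ker.mp hx)
        exact this
      set r : Q → G := Function.surjInv (QuotientGroup.mk'_surjective N) with hrdef
      have hr : ∀ q, QuotientGroup.mk' N (r q) = q := fun q =>
        Function.surjInv_eq (QuotientGroup.mk'_surjective N) q
      have hsum1 : ∑ g ∈ x.coeff.support, MonoidAlgebra.single g (x.coeff g) = x := by
        conv_rhs => rw [← MonoidAlgebra.sum_coeff_single x]
        rfl
      have hsum2 : ∑ g ∈ x.coeff.support,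
          MonoidAlgebra.single (r (QuotientGroup.mk' N g)) (x.coeff g) = 0 := by
        have h1 : ∑ g ∈ x.coeff.support, MonoidAlgebra.single (r (QuotientGroup.mk' N g)) (x.coeff g)
            = MonoidAlgebra.ofCoeff (Finsupp.mapDomain (r ∘ ⇑(QuotientGroup.mk' N)) x.coeff) := by
          rw [Finsupp.mapDomain, Finsupp.sum, MonoidAlgebra.ofCoeff_sum]; rfl
        rw [h1, Finsupp.mapDomain_comp, hx0, Finsupp.mapDomain_zero, MonoidAlgebra.ofCoeff_zero]
      have hxsum : x = ∑ g ∈ x.coeff.support,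
          (MonoidAlgebra.single g (x.coeff g)
            - MonoidAlgebra.single (r (QuotientGroup.mk' N g)) (x.coeff g)) := by
        rw [Finset.sum_sub_distrib, hsum1, hsum2, sub_zero]
      rw [hxsum]
      apply Submodule.sum_mem
      intro g _
      set w : G := r (QuotientGroup.mk' N g) with hwdef
      obtain ⟨ν, hνN, hν⟩ : ∃ ν ∈ N, w * ν = g :=
        (QuotientGroup.mk'_eq_mk' N).mp (by rw [hwdef, hr])
      obtain ⟨kz, hkz⟩ := Subgroup.mem_zpowers_iff.mp hνN
      set jn : ℕ := (kz % (p : ℤ)).toNat with hjn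
      have hzj : z ^ jn = ν := by
        have hq : ((jn : ℤ)) = kz % (p : ℤ) :=
          Int.toNat_of_nonneg (Int.emod_nonneg _ (by exact_mod_cast hp.ne_zero))
        calc z ^ jn = z ^ ((jn : ℤ)) := (zpow_natCast z jn).symm
          _ = z ^ (kz % ((orderOf z : ℕ) : ℤ)) := by rw [hq, hordz]
          _ = z ^ kz := zpow_mod_orderOf z kz
          _ = ν := hkz
      set u : MonoidAlgebra F G := MonoidAlgebra.single z 1 with hudef
      have hcomm : Commute t (∑ i ∈ Finset.range jn, u ^ i) := by
        apply Commute.sum_right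
        intro i _
        exact Commute.pow_right (by rw [htdef, hudef]; exact (Commute.refl _).sub_left (Commute.one_left _)) i
      have hgeom : (∑ i ∈ Finset.range jn, u ^ i) * t = MonoidAlgebra.single (z ^ jn) 1 - 1 := by
        rw [htdef, hudef, geom_sum_mul, MonoidAlgebra.single_pow, one_pow]
      have key : MonoidAlgebra.single g (x.coeff g) - MonoidAlgebra.single w (x.coeff g)
          = t * ((∑ i ∈ Finset.range jn, u ^ i) * MonoidAlgebra.single w (x.coeff g)) := by
        rw [← mul_assoc, hcomm.eq, hgeom, sub_mul, one_mul, hzj,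
          MonoidAlgebra.single_mul_single, one_mul]
        congr 2
        rw [← hν, (Subgroup.mem_center_iff.mp (hNle hνN) w)]
      rw [key]
      exact ⟨_, rfl⟩
    -- powers of I
    have hIpow : ∀ s : ℕ, 1 ≤ s →
        (LinearMap.range (LinearMap.mulLeft F t) : Submodule F (MonoidAlgebra F G)) ^ s ≤
          LinearMap.range (LinearMap.mulLeft F (t ^ s)) := by
      intro s
      induction s with
      | zero => omega
      | succ s ih =>
        intro _
        rcases Nat.eq_zero_or_pos s with h0 | hpos
        · subst h0; simpa using le_refl _
        · rw [pow_succ, pow_succ]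
          apply Submodule.mul_le.mpr
          intro a ha b hb
          obtain ⟨a', rfl⟩ := ih hpos ha
          obtain ⟨b', rfl⟩ := hb
          refine ⟨a' * b', ?_⟩
          simp only [LinearMap.mulLeft_apply]
          calc t ^ s * t * (a' * b') = t ^ s * (t * a' * b') := by rw [mul_assoc, mul_assoc]
            _ = t ^ s * (a' * (t * b')) := by rw [htc a', mul_assoc]
            _ = t ^ s * a' * (t * b') := by rw [mul_assoc]
    -- the chain
    have hmapDelta : Submodule.map π.toLinearMap (LinearMap.ker (aug F G).toLinearMap) ≤
        LinearMap.ker (aug F Q).toLinearMap := by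
      rintro y ⟨x, hx, rfl⟩
      have hx' : aug F G x = 0 := by simpa using hx
      rw [LinearMap.mem_ker]
      simp only [AlgHom.toLinearMap_apply]
      rw [haug]; exact hx'
    have h1 : (LinearMap.ker (aug F G).toLinearMap : Submodule F (MonoidAlgebra F G)) ^ m ≤
        LinearMap.ker π.toLinearMap := by
      intro x hx
      rw [LinearMap.mem_ker]
      have h2 : π.toLinearMap x ∈ Submodule.map π.toLinearMap
          ((LinearMap.ker (aug F G).toLinearMap) ^ m) := Submodule.mem_map_of_mem hx
      rw [Submodule.map_pow] at h2
      have h3 := submodule_pow_mono hmapDelta m h2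
      rw [hQbot, Submodule.mem_bot] at h3
      simpa using h3
    refine ⟨m * p, Nat.mul_pos hm hp.pos, ?_⟩
    rw [← le_bot_iff, pow_mul]
    calc ((LinearMap.ker (aug F G).toLinearMap : Submodule F (MonoidAlgebra F G)) ^ m) ^ p
        ≤ (LinearMap.ker π.toLinearMap : Submodule F (MonoidAlgebra F G)) ^ p :=
          submodule_pow_mono h1 p
      _ ≤ (LinearMap.range (LinearMap.mulLeft F t) : Submodule F (MonoidAlgebra F G)) ^ p :=
          submodule_pow_mono hJI p
      _ ≤ LinearMap.range (LinearMap.mulLeft F (t ^ p)) := hIpow p hp.one_le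
      _ ≤ ⊥ := by rw [htp, LinearMap.mulLeft_zero_eq_zero, LinearMap.range_zero]

lemma isNilpotent_of_aug_eq_zero {G : Type u} [Group G] [Finite G]
    (hG : IsPGroup p G) (x : MonoidAlgebra F G) (hx : aug F G x = 0) : IsNilpotent x := by
  obtain ⟨n, hn, hbot⟩ := delta_pow_eq_bot p F (Nat.card G) G rfl hG
  refine ⟨n, ?_⟩
  have hmem : x ∈ (LinearMap.ker (aug F G).toLinearMap : Submodule F (MonoidAlgebra F G)) := by
    rw [LinearMap.mem_ker]; simpa using hx
  have := Submodule.pow_mem_pow _ hmem n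
  rw [hbot, Submodule.mem_bot] at this
  exact this

lemma isUnit_of_aug_eq_one {G : Type u} [Group G] [Finite G]
    (hG : IsPGroup p G) (x : MonoidAlgebra F G) (hx : aug F G x = 1) : IsUnit x := by
  have h1 : aug F G (1 - x) = 0 := by rw [map_sub, map_one, hx, sub_self]
  have := (isNilpotent_of_aug_eq_zero hG (1 - x) h1).isUnit_one_sub
  simpa using this

end Nilpotency
section Counting

variable {F : Type*} [Field F] {G : Type*} [Group G]

lemma sA_neg (x : MonoidAlgebra F G) : sA (-x) = -sA x := by
  have h := sA_add x (-x)
  rw [add_neg_cancel, sA_zero] at h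
  exact (neg_eq_of_add_eq_zero_right h.symm).symm

/-- generic fiber counting for surjective additive maps -/
lemma card_eq_fiber_mul {M : Type*} [AddCommGroup M] [Finite M] (φ : M →+ F)
    (hs : Function.Surjective φ) (c : F) :
    Nat.card M = Nat.card {x : M // φ x = c} * Nat.card F := by
  obtain ⟨x₀, hx₀⟩ := hs c
  have e : {x : M // φ x = c} ≃ (AddMonoidHom.ker φ) :=
    { toFun := fun x => ⟨x.1 - x₀, by
        rw [AddMonoidHom.mem_ker, map_sub, x.2, hx₀, sub_self]⟩
      invFun := fun y => ⟨y.1 + x₀, by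
        rw [map_add, hx₀, AddMonoidHom.mem_ker.mp y.2, zero_add]⟩
      left_inv := fun x => by ext; simp
      right_inv := fun y => by ext; simp }
  have h1 : Nat.card M = Nat.card (M ⧸ AddMonoidHom.ker φ) * Nat.card (AddMonoidHom.ker φ) :=
    AddSubgroup.card_eq_card_quotient_mul_card_addSubgroup _
  have h2 : Nat.card (M ⧸ AddMonoidHom.ker φ) = Nat.card F :=
    Nat.card_congr (QuotientAddGroup.quotientKerEquivOfSurjective φ hs).toEquiv
  rw [h1, h2, Nat.card_congr e, mul_comm]

def invSetoid (G : Type*) [Group G] : Setoid G :=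
  { r := fun g h => h = g ∨ h = g⁻¹
    iseqv := by
      constructor
      · intro g; exact Or.inl rfl
      · rintro g h (rfl | rfl)
        · exact Or.inl rfl
        · right; rw [inv_inv]
      · rintro g h k (rfl | rfl) hk
        · exact hk
        · rcases hk with rfl | rfl
          · exact Or.inr rfl
          · left; rw [inv_inv] }

variable [Fintype G]

lemma self_inv_eq_one (hodd : Odd (Nat.card G)) {g : G} (h : g = g⁻¹) : g = 1 := by
  have h2 : g ^ 2 = 1 := by
    rw [pow_two]; nth_rewrite 2 [h]; exact mul_inv_cancel g
  have hd1 : orderOf g ∣ 2 := orderOf_dvd_of_pow_eq_one h2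
  have hd2 : orderOf g ∣ Nat.card G := orderOf_dvd_natCard g
  have hcop : Nat.Coprime 2 (Nat.card G) := Nat.coprime_two_left.mpr hodd
  have hdg : orderOf g ∣ Nat.gcd 2 (Nat.card G) := Nat.dvd_gcd hd1 hd2
  rw [Nat.Coprime.gcd_eq_one hcop, Nat.dvd_one] at hdg
  exact orderOf_eq_one_iff.mp hdg

lemma two_mul_card_quotient (hodd : Odd (Nat.card G)) :
    2 * Nat.card (Quotient (invSetoid G)) = Nat.card G + 1 := by
  classical
  haveI : DecidableRel (invSetoid G).r := fun a b => Classical.dec _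
  set c : Quotient (invSetoid G) := Quotient.mk (invSetoid G) 1 with hc
  have hfib : ∀ q : Quotient (invSetoid G),
      Fintype.card {g : G // Quotient.mk (invSetoid G) g = q} = if q = c then 1 else 2 := by
    intro q
    refine Quotient.inductionOn q ?_
    intro g₀
    by_cases hg : g₀ = 1
    · subst hg
      rw [if_pos rfl]
      rw [Fintype.card_eq_one_iff]
      refine ⟨⟨1, rfl⟩, ?_⟩
      rintro ⟨g, hgq⟩
      have := Quotient.exact hgq
      rcases this with h | h
      · ext; simp [h.symm]
      · ext; simpa using congrArg Inv.inv h.symm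
    · have hne : Quotient.mk (invSetoid G) g₀ ≠ c := by
        intro hq
        rcases Quotient.exact hq with h | h
        · exact hg h.symm
        · apply hg; simpa using congrArg Inv.inv h.symm
      rw [if_neg hne]
      have hgg : g₀ ≠ g₀⁻¹ := fun h => hg (self_inv_eq_one hodd h)
      have e : {g : G // Quotient.mk (invSetoid G) g = Quotient.mk (invSetoid G) g₀} ≃
          ({g₀, g₀⁻¹} : Finset G) :=
        { toFun := fun x => ⟨x.1, by
            rcases Quotient.exact x.2 with h | h
            · simp [h.symm]
            · simp [show x.1 = g₀⁻¹ by simpa using congrArg Inv.inv h.symm]⟩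
          invFun := fun x => ⟨x.1, by
            rcases Finset.mem_insert.mp x.2 with h | h
            · exact Quotient.sound (Or.inl h.symm)
            · refine Quotient.sound (Or.inr ?_)
              have hx : (x : G) = g₀⁻¹ := Finset.mem_singleton.mp h
              rw [hx, inv_inv]⟩
          left_inv := fun x => rfl
          right_inv := fun x => rfl }
      rw [Fintype.card_congr e, Fintype.card_coe, Finset.card_pair hgg]
  have hsum : Fintype.card G = ∑ q : Quotient (invSetoid G),
      Fintype.card {g : G // Quotient.mk (invSetoid G) g = q} := by
    rw [← Fintype.card_sigma]
    exact Fintype.card_congr (Equiv.sigmaFiberEquiv (Quotient.mk (invSetoid G))).symm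
  have hc' : ∑ q : Quotient (invSetoid G),
      Fintype.card {g : G // Quotient.mk (invSetoid G) g = q}
      = 1 + 2 * (Fintype.card (Quotient (invSetoid G)) - 1) := by
    rw [Finset.sum_congr rfl (fun q _ => hfib q)]
    rw [← Finset.add_sum_erase _ _ (Finset.mem_univ c), if_pos rfl]
    congr 1
    rw [Finset.sum_congr rfl (fun q hq => if_neg (Finset.ne_of_mem_erase hq)),
      Finset.sum_const, Finset.card_erase_of_mem (Finset.mem_univ c), Finset.card_univ,
      smul_eq_mul, mul_comm]
  haveI : Nonempty (Quotient (invSetoid G)) := ⟨Quotient.mk (invSetoid G) 1⟩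
  have hpos : 0 < Fintype.card (Quotient (invSetoid G)) := Fintype.card_pos
  rw [Nat.card_eq_fintype_card, Nat.card_eq_fintype_card, hsum, hc']
  omega

variable [Fintype F]

lemma card_symm_subtype (hodd : Odd (Nat.card G)) :
    Nat.card {x : MonoidAlgebra F G // sA x = x}
      = Nat.card F ^ ((Nat.card G + 1) / 2) := by
  classical
  have e : {x : MonoidAlgebra F G // sA x = x} ≃ (Quotient (invSetoid G) → F) :=
    { toFun := fun x q => Quotient.liftOn q (⇑x.1.coeff) (by
        rintro a b (rfl | rfl)
        · rfl
        · have := sA_apply x.1 a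
          rw [x.2] at this
          exact this)
      invFun := fun f => ⟨MonoidAlgebra.ofCoeff (Finsupp.equivFunOnFinite.symm (fun g => f (Quotient.mk _ g))), by
        ext g
        rw [sA_apply]
        show (Finsupp.equivFunOnFinite.symm fun g => f (Quotient.mk _ g)) g⁻¹
          = (Finsupp.equivFunOnFinite.symm fun g => f (Quotient.mk _ g)) g
        rw [Finsupp.coe_equivFunOnFinite_symm]
        exact congrArg f (Quotient.sound (Or.inr (inv_inv g).symm))⟩
      left_inv := fun x => by
        ext g
        simp [Quotient.liftOn]
      right_inv := fun f => by
        funext q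
        refine Quotient.inductionOn q ?_
        intro g
        simp [Quotient.liftOn] }
  rw [Nat.card_congr e, Nat.card_fun]
  congr 1
  have := two_mul_card_quotient (G := G) hodd
  omega

end Counting
/-- for `p` an odd prime and the canonical involution `*` (linear
extension of `g ↦ g⁻¹`), `|V_*(FG)| = |F|^((|G| - 1)/2)`. -/
theorem card_star_unitary_subgroup_odd
    (p : ℕ) (hp : p.Prime) (hodd : Odd p)
    (F : Type*) [Field F] [Fintype F] [CharP F p]
    (G : Type*) [Group G] [Fintype G] (hG : IsPGroup p G) :
    Nat.card {x : MonoidAlgebra F G |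
        aug F G x = 1 ∧ x * dia (fun g : G => g⁻¹) x = 1 ∧ dia (fun g : G => g⁻¹) x * x = 1} =
      Fintype.card F ^ ((Fintype.card G - 1) / 2) := by
  classical
  haveI : Fact p.Prime := ⟨hp⟩
  haveI : Finite (MonoidAlgebra F G) := Finite.of_equiv _ (MonoidAlgebra.coeffEquiv.trans Finsupp.equivFunOnFinite).symm
  have hgoal : Nat.card {x : MonoidAlgebra F G |
        aug F G x = 1 ∧ x * dia (fun g : G => g⁻¹) x = 1 ∧ dia (fun g : G => g⁻¹) x * x = 1}
      = Nat.card {x : MonoidAlgebra F G // aug F G x = 1 ∧ x * sA x = 1 ∧ sA x * x = 1} :=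
    Nat.card_congr (Equiv.subtypeEquivRight fun x => Iff.rfl)
  rw [hgoal]
  have hqodd : Odd (Fintype.card F) := by
    obtain ⟨r, hpr, hcard⟩ := FiniteField.card F p
    rw [hcard]; exact hodd.pow
  have hnodd : Odd (Fintype.card G) := by
    obtain ⟨k, hk⟩ := (IsPGroup.iff_card).mp hG
    rw [← Nat.card_eq_fintype_card, hk]; exact hodd.pow
  have hn1 : 1 ≤ Fintype.card G := Fintype.card_pos
  have hq1 : 1 ≤ Fintype.card F := Fintype.card_pos
  have e0 : MonoidAlgebra F G ≃ (G → F) := MonoidAlgebra.coeffEquiv.trans Finsupp.equivFunOnFinite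
  have hcardA : Nat.card (MonoidAlgebra F G) = Fintype.card F ^ Fintype.card G := by
    rw [Nat.card_congr e0, Nat.card_fun, Nat.card_eq_fintype_card, Nat.card_eq_fintype_card]
  set φ : MonoidAlgebra F G →+ F :=
    AddMonoidHom.mk' (fun x => aug F G x) (fun a b => map_add _ a b) with hφ
  have hφs : Function.Surjective φ := fun c => ⟨MonoidAlgebra.single 1 c, aug_single 1 c⟩
  have hV : Nat.card (MonoidAlgebra F G)
      = Nat.card {x : MonoidAlgebra F G // aug F G x = 1} * Nat.card F :=
    card_eq_fiber_mul φ hφs 1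
  set M : ℕ := Nat.card {x : MonoidAlgebra F G // aug F G x = 1} with hM
  have hMval : M = Fintype.card F ^ (Fintype.card G - 1) := by
    have h1 : Fintype.card F ^ Fintype.card G = M * Fintype.card F := by
      rw [← hcardA, hV, Nat.card_eq_fintype_card]
    have h2 : Fintype.card F ^ Fintype.card G
        = Fintype.card F ^ (Fintype.card G - 1) * Fintype.card F := by
      rw [← pow_succ, Nat.sub_add_cancel hn1]
    have h3 : M * Fintype.card F
        = Fintype.card F ^ (Fintype.card G - 1) * Fintype.card F := by rw [← h1, h2]
    exact Nat.eq_of_mul_eq_mul_right (by omega) h3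
  have hModd : Odd M := by rw [hMval]; exact hqodd.pow
  have hunit : ∀ x : MonoidAlgebra F G, aug F G x = 1 → IsUnit x := fun x hx =>
    isUnit_of_aug_eq_one hG x hx
  -- every aug-one element satisfies x ^ M = 1
  have hpow : ∀ x : MonoidAlgebra F G, aug F G x = 1 → x ^ M = 1 := by
    intro x hx
    set ψ : (MonoidAlgebra F G)ˣ →* Fˣ := Units.map
      { toFun := fun a => aug F G a, map_one' := map_one _, map_mul' := map_mul _ } with hψ
    have hmem : ∀ u : (MonoidAlgebra F G)ˣ, u ∈ ψ.ker ↔ aug F G (u : MonoidAlgebra F G) = 1 := by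
      intro u
      rw [MonoidHom.mem_ker, hψ, Units.ext_iff, Units.coe_map]
      rfl
    have e2 : ψ.ker ≃ {x : MonoidAlgebra F G // aug F G x = 1} :=
      { toFun := fun u => ⟨((u : (MonoidAlgebra F G)ˣ) : MonoidAlgebra F G), (hmem _).mp u.2⟩
        invFun := fun x => ⟨(hunit x.1 x.2).unit, (hmem _).mpr (by
          rw [IsUnit.unit_spec]; exact x.2)⟩
        left_inv := fun u => Subtype.ext (Units.ext
          (IsUnit.unit_spec (hunit _ ((hmem _).mp u.2))))
        right_inv := fun x => Subtype.ext (IsUnit.unit_spec (hunit x.1 x.2)) }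
    have hcardH : Nat.card ψ.ker = M := by rw [hM]; exact Nat.card_congr e2
    set u : ψ.ker := ⟨(hunit x hx).unit, (hmem _).mpr (by rw [IsUnit.unit_spec]; exact hx)⟩
      with hu
    have h1 : u ^ M = 1 := by rw [← hcardH]; exact pow_card_eq_one'
    have h2 : ((u : (MonoidAlgebra F G)ˣ)) ^ M = 1 := by
      have := congrArg (Subtype.val) h1
      simpa using this
    have h3 : ((u : (MonoidAlgebra F G)ˣ) : MonoidAlgebra F G) = x := IsUnit.unit_spec _
    rw [← h3, ← Units.val_pow_eq_pow_val, h2, Units.val_one]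
  -- square roots
  set sq : MonoidAlgebra F G → MonoidAlgebra F G := fun y => y ^ ((M + 1) / 2) with hsq
  have hsq_mul : ∀ y, aug F G y = 1 → sq y * sq y = y := by
    intro y hy
    show y ^ ((M + 1) / 2) * y ^ ((M + 1) / 2) = y
    rw [← pow_add]
    have h2 : (M + 1) / 2 + (M + 1) / 2 = M + 1 := by obtain ⟨l, hl⟩ := hModd; omega
    rw [h2, pow_succ, hpow y hy, one_mul]
  have hsq_aug : ∀ y, aug F G y = 1 → aug F G (sq y) = 1 := by
    intro y hy
    show aug F G (y ^ ((M + 1) / 2)) = 1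
    rw [map_pow, hy, one_pow]
  have hsq_symm : ∀ y, sA y = y → sA (sq y) = sq y := by
    intro y hy
    show sA (y ^ ((M + 1) / 2)) = y ^ ((M + 1) / 2)
    rw [sA_pow, hy]
  -- unit lemmas
  have hflip : ∀ x : MonoidAlgebra F G, IsUnit x → sA x * x = 1 → x * sA x = 1 := by
    intro x hx h
    obtain ⟨v, rfl⟩ := hx
    have hv : sA (v : MonoidAlgebra F G) = ((v⁻¹ : (MonoidAlgebra F G)ˣ) : MonoidAlgebra F G) := by
      calc sA (v : MonoidAlgebra F G)
          = sA (v : MonoidAlgebra F G) * ((v : MonoidAlgebra F G) * ↑v⁻¹) := by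
            rw [Units.mul_inv, mul_one]
        _ = (sA (v : MonoidAlgebra F G) * v) * ↑v⁻¹ := by rw [mul_assoc]
        _ = ↑v⁻¹ := by rw [h, one_mul]
    rw [hv, Units.mul_inv]
  have hsAinv : ∀ σ : MonoidAlgebra F G, IsUnit σ → sA σ = σ →
      sA (Ring.inverse σ) = Ring.inverse σ := by
    intro σ hσ hs
    have h1 : sA (Ring.inverse σ) * σ = 1 := by
      have h2 := congrArg sA (Ring.mul_inverse_cancel σ hσ)
      rw [sA_mul, sA_one, hs] at h2
      exact h2
    exact left_inv_eq_right_inv h1 (Ring.mul_inverse_cancel σ hσ)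
  have haug_inv : ∀ x, aug F G x = 1 → aug F G (Ring.inverse x) = 1 := by
    intro x hx
    have h2 := congrArg (aug F G) (Ring.mul_inverse_cancel x (hunit x hx))
    rw [map_mul, hx, one_mul, map_one] at h2
    exact h2
  have hy1 : ∀ x, aug F G x = 1 → aug F G (sA x * x) = 1 := fun x hx => by
    rw [map_mul, aug_sA, hx, one_mul]
  have hy2 : ∀ x : MonoidAlgebra F G, sA (sA x * x) = sA x * x := fun x => by
    rw [sA_mul, sA_invol]
  -- associativity helper
  have habcd : ∀ a b c d : MonoidAlgebra F G, a * b * (c * d) = a * (b * c * d) := by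
    intro a b c d
    rw [mul_assoc a b, ← mul_assoc b c d]
  -- the key product computation
  have hkey : ∀ x : MonoidAlgebra F G, aug F G x = 1 →
      sA (x * Ring.inverse (sq (sA x * x))) * (x * Ring.inverse (sq (sA x * x))) = 1 := by
    intro x hx
    have hσaug : aug F G (sq (sA x * x)) = 1 := hsq_aug _ (hy1 x hx)
    have hσu : IsUnit (sq (sA x * x)) := hunit _ hσaug
    rw [sA_mul, hsAinv _ hσu (hsq_symm _ (hy2 x))]
    calc Ring.inverse (sq (sA x * x)) * sA x * (x * Ring.inverse (sq (sA x * x)))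
        = Ring.inverse (sq (sA x * x)) * (sA x * x * Ring.inverse (sq (sA x * x))) :=
          habcd _ _ _ _
      _ = Ring.inverse (sq (sA x * x)) *
          (sq (sA x * x) * sq (sA x * x) * Ring.inverse (sq (sA x * x))) := by
          rw [hsq_mul _ (hy1 x hx)]
      _ = Ring.inverse (sq (sA x * x)) *
          (sq (sA x * x) * (sq (sA x * x) * Ring.inverse (sq (sA x * x)))) := by
          rw [mul_assoc (sq (sA x * x))]
      _ = Ring.inverse (sq (sA x * x)) * sq (sA x * x) := by
          rw [Ring.mul_inverse_cancel _ hσu, mul_one]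
      _ = 1 := Ring.inverse_mul_cancel _ hσu
  -- the main equivalence
  have E : {x : MonoidAlgebra F G // aug F G x = 1} ≃
      ({y : MonoidAlgebra F G // aug F G y = 1 ∧ sA y = y} ×
       {x : MonoidAlgebra F G // aug F G x = 1 ∧ x * sA x = 1 ∧ sA x * x = 1}) :=
    { toFun := fun x =>
        (⟨sA x.1 * x.1, hy1 x.1 x.2, hy2 x.1⟩,
         ⟨x.1 * Ring.inverse (sq (sA x.1 * x.1)),
          by
            rw [map_mul, x.2, one_mul]
            exact haug_inv _ (hsq_aug _ (hy1 x.1 x.2)),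
          hflip _ ((hunit x.1 x.2).mul
            (hunit _ (hsq_aug _ (hy1 x.1 x.2))).ringInverse) (hkey x.1 x.2),
          hkey x.1 x.2⟩)
      invFun := fun z => ⟨z.2.1 * sq z.1.1, by
        rw [map_mul, hsq_aug _ z.1.2.1, z.2.2.1, mul_one]⟩
      left_inv := by
        intro x
        apply Subtype.ext
        show x.1 * Ring.inverse (sq (sA x.1 * x.1)) * sq (sA x.1 * x.1) = x.1
        exact Ring.inverse_mul_cancel_right _ _ (hunit _ (hsq_aug _ (hy1 x.1 x.2)))
      right_inv := by
        rintro ⟨y, t⟩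
        have hσs : sA (sq y.1) = sq y.1 := hsq_symm _ y.2.2
        have hσσ : sq y.1 * sq y.1 = y.1 := hsq_mul _ y.2.1
        have hσu : IsUnit (sq y.1) := hunit _ (hsq_aug _ y.2.1)
        have hfx : sA (t.1 * sq y.1) * (t.1 * sq y.1) = y.1 := by
          rw [sA_mul, hσs]
          calc sq y.1 * sA t.1 * (t.1 * sq y.1)
              = sq y.1 * (sA t.1 * t.1 * sq y.1) := habcd _ _ _ _
            _ = sq y.1 * (1 * sq y.1) := by rw [t.2.2.2]
            _ = y.1 := by rw [one_mul, hσσ]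
        refine Prod.ext ?_ ?_
        · exact Subtype.ext hfx
        · apply Subtype.ext
          show t.1 * sq y.1 * Ring.inverse (sq (sA (t.1 * sq y.1) * (t.1 * sq y.1))) = t.1
          rw [hfx]
          exact Ring.mul_inverse_cancel_right _ _ hσu }
  -- counting
  have hcount : M = Nat.card {y : MonoidAlgebra F G // aug F G y = 1 ∧ sA y = y} *
      Nat.card {x : MonoidAlgebra F G // aug F G x = 1 ∧ x * sA x = 1 ∧ sA x * x = 1} := by
    rw [hM, Nat.card_congr E, Nat.card_prod]
  -- symmetric subgroup count
  set ψW : MonoidAlgebra F G →+ MonoidAlgebra F G :=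
    AddMonoidHom.mk' (fun x => sA x - x) (fun a b => by
      show sA (a + b) - (a + b) = (sA a - a) + (sA b - b)
      rw [sA_add]; abel) with hψW
  have hWmem : ∀ x : MonoidAlgebra F G, x ∈ ψW.ker ↔ sA x = x := by
    intro x
    rw [AddMonoidHom.mem_ker]
    show sA x - x = 0 ↔ sA x = x
    exact sub_eq_zero
  have hcardW : Nat.card ψW.ker = Fintype.card F ^ ((Fintype.card G + 1) / 2) := by
    have e4 : ψW.ker ≃ {x : MonoidAlgebra F G // sA x = x} :=
      Equiv.subtypeEquivRight hWmem
    rw [Nat.card_congr e4, card_symm_subtype (by rwa [Nat.card_eq_fintype_card]),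
      Nat.card_eq_fintype_card, Nat.card_eq_fintype_card]
  set φW : ψW.ker →+ F := AddMonoidHom.mk' (fun x => aug F G x.1) (fun a b => by
    show aug F G ((a : MonoidAlgebra F G) + b) = _
    rw [map_add]) with hφW
  have hφWs : Function.Surjective φW := by
    intro c
    refine ⟨⟨MonoidAlgebra.single 1 c, (hWmem _).mpr (by rw [sA_single, inv_one])⟩, ?_⟩
    exact aug_single 1 c
  have hfibW := card_eq_fiber_mul φW hφWs 1
  have eS : {x : ψW.ker // φW x = 1} ≃
      {y : MonoidAlgebra F G // aug F G y = 1 ∧ sA y = y} :=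
    { toFun := fun x => ⟨x.1.1, x.2, (hWmem _).mp x.1.2⟩
      invFun := fun y => ⟨⟨y.1, (hWmem _).mpr y.2.2⟩, y.2.1⟩
      left_inv := fun x => rfl
      right_inv := fun y => rfl }
  have hS2 : Nat.card {y : MonoidAlgebra F G // aug F G y = 1 ∧ sA y = y}
      = Fintype.card F ^ ((Fintype.card G - 1) / 2) := by
    have h1 : Fintype.card F ^ ((Fintype.card G + 1) / 2)
        = Nat.card {y : MonoidAlgebra F G // aug F G y = 1 ∧ sA y = y} * Fintype.card F := by
      rw [← hcardW, hfibW, Nat.card_congr eS, Nat.card_eq_fintype_card (α := F)]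
    have h2 : (Fintype.card G + 1) / 2 = (Fintype.card G - 1) / 2 + 1 := by
      obtain ⟨l, hl⟩ := hnodd; omega
    rw [h2, pow_succ] at h1
    exact (Nat.eq_of_mul_eq_mul_right (by omega) h1.symm)
  -- finish
  have h4 : Fintype.card F ^ ((Fintype.card G - 1) / 2)
      * Fintype.card F ^ ((Fintype.card G - 1) / 2)
      = Fintype.card F ^ (Fintype.card G - 1) := by
    rw [← pow_add]
    congr 1
    obtain ⟨l, hl⟩ := hnodd; omega
  have hfinal : Fintype.card F ^ ((Fintype.card G - 1) / 2)
        * Fintype.card F ^ ((Fintype.card G - 1) / 2)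
      = Fintype.card F ^ ((Fintype.card G - 1) / 2) *
        Nat.card {x : MonoidAlgebra F G // aug F G x = 1 ∧ x * sA x = 1 ∧ sA x * x = 1} := by
    rw [h4, ← hMval, hcount, hS2]
  exact (Nat.eq_of_mul_eq_mul_left (by positivity) hfinal).symm
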